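/- arXiv:math/0008232 — 3 statements merged into one kernel-verified Lean document; each statement's English description precedes it below -/
import Mathlib

section
/- Let d be an algebraic integer such that d(d+1)···(d+k-1)/k! and d(d-1)···(d-k+1)/k! are algebraic integers for all positive integers k. Then d is a rational integer. -/
/-!
For `k ≥ 1` the number `α = C(d+k-1, k) * C(d, k) = ∏_{i<k} (d² - i²) / k!²` is an algebraic
integer. If every conjugate of `d` has absolute value at most `M`, every conjugate of `α` has
absolute value at most `∏_{i<k} (M² + i²) / k!² ≤ M² e^{2M²} / k²`, which is `< 1` for large `k`.
The norm of `α` is then a rational integer of absolute value `< 1`, so `α = 0`, i.e. `d = ±i`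
for some `i < k`.
-/

open Finset Filter IntermediateField
open scoped Nat

lemma sum_range_inv_succ_sq_le_two (n : ℕ) : ∑ i ∈ range n, (((i + 1 : ℕ) : ℝ) ^ 2)⁻¹ ≤ 2 := by
  have h := sum_Ioo_inv_sq_le (α := ℝ) 0 (n + 1)
  rw [Nat.cast_zero, zero_add, div_one] at h
  rwa [range_eq_Ico, sum_Ico_add' (fun i : ℕ => ((i : ℝ) ^ 2)⁻¹), zero_add]

/-- `1 + C/i² ≤ exp (C/i²)` and `∑ 1/i² ≤ 2`. -/
lemma prod_range_succ_add_sq_le {C : ℝ} (hC : 0 ≤ C) (n : ℕ) :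
    ∏ i ∈ range (n + 1), (C + (i : ℝ) ^ 2) ≤ C * Real.exp (2 * C) * (n ! : ℝ) ^ 2 := by
  have hfactor : ∀ i ∈ range n, C + ((i + 1 : ℕ) : ℝ) ^ 2
      ≤ ((i + 1 : ℕ) : ℝ) ^ 2 * Real.exp (C * (((i + 1 : ℕ) : ℝ) ^ 2)⁻¹) := by
    intro i _
    have hpos : (0 : ℝ) < ((i + 1 : ℕ) : ℝ) ^ 2 := by positivity
    calc C + ((i + 1 : ℕ) : ℝ) ^ 2
        = ((i + 1 : ℕ) : ℝ) ^ 2 * (C * (((i + 1 : ℕ) : ℝ) ^ 2)⁻¹ + 1) := by field_simp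
      _ ≤ _ := by gcongr; exact Real.add_one_le_exp _
  have hfact : ∏ i ∈ range n, ((i + 1 : ℕ) : ℝ) ^ 2 = (n ! : ℝ) ^ 2 := by
    rw [prod_pow, ← Nat.cast_prod, prod_range_add_one_eq_factorial]
  rw [prod_range_succ']
  calc (∏ i ∈ range n, (C + ((i + 1 : ℕ) : ℝ) ^ 2)) * (C + ((0 : ℕ) : ℝ) ^ 2)
      ≤ (∏ i ∈ range n, ((i + 1 : ℕ) : ℝ) ^ 2 * Real.exp (C * (((i + 1 : ℕ) : ℝ) ^ 2)⁻¹)) * C := by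
        rw [Nat.cast_zero, zero_pow two_ne_zero, add_zero]
        gcongr with i hi
        exact hfactor i hi
    _ = (n ! : ℝ) ^ 2 * Real.exp (C * ∑ i ∈ range n, (((i + 1 : ℕ) : ℝ) ^ 2)⁻¹) * C := by
        rw [prod_mul_distrib, ← Real.exp_sum, ← mul_sum, hfact]
    _ ≤ (n ! : ℝ) ^ 2 * Real.exp (2 * C) * C := by
        rw [mul_comm 2 C]; gcongr; exact sum_range_inv_succ_sq_le_two n
    _ = C * Real.exp (2 * C) * (n ! : ℝ) ^ 2 := by ring

lemma eventually_prod_range_add_sq_lt_factorial_sq {C : ℝ} (hC : 0 ≤ C) :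
    ∀ᶠ k in atTop, ∏ i ∈ range k, (C + (i : ℝ) ^ 2) < (k ! : ℝ) ^ 2 := by
  have hlarge : ∀ᶠ k : ℕ in atTop, C * Real.exp (2 * C) < k :=
    tendsto_natCast_atTop_atTop.eventually_gt_atTop _
  filter_upwards [hlarge, eventually_gt_atTop 0] with k hk hk0
  obtain ⟨n, rfl⟩ := Nat.exists_eq_add_one.mpr hk0
  have hsq : ((n + 1 : ℕ) : ℝ) ≤ ((n + 1 : ℕ) : ℝ) ^ 2 := by
    exact_mod_cast Nat.le_self_pow two_ne_zero (n + 1)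
  calc ∏ i ∈ range (n + 1), (C + (i : ℝ) ^ 2)
      ≤ C * Real.exp (2 * C) * (n ! : ℝ) ^ 2 := prod_range_succ_add_sq_le hC n
    _ < ((n + 1 : ℕ) : ℝ) ^ 2 * (n ! : ℝ) ^ 2 := by gcongr; linarith
    _ = ((n + 1)! : ℝ) ^ 2 := by rw [Nat.factorial_succ]; push_cast; ring

section binomialProduct

variable {F : Type*} [Field F]

def binomialProduct (k : ℕ) (z : F) : F :=
  (∏ i ∈ range k, (z + i)) / k ! * ((∏ i ∈ range k, (z - i)) / k !)

lemma map_binomialProduct {E G : Type*} [Field E] [FunLike G F E] [RingHomClass G F E] (σ : G)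
    (k : ℕ) (z : F) : σ (binomialProduct k z) = binomialProduct k (σ z) := by
  simp [binomialProduct, map_prod]

lemma exists_eq_intCast_of_binomialProduct_eq_zero [CharZero F] {k : ℕ} {z : F}
    (h : binomialProduct k z = 0) : ∃ m : ℤ, z = m := by
  have hk : (k ! : F) ≠ 0 := by exact_mod_cast k.factorial_ne_zero
  simp only [binomialProduct, mul_eq_zero, div_eq_zero_iff, hk, or_false,
    prod_eq_zero_iff] at h
  rcases h with ⟨i, -, hi⟩ | ⟨i, -, hi⟩
  · exact ⟨-i, by push_cast; linear_combination hi⟩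
  · exact ⟨i, by push_cast; linear_combination hi⟩

end binomialProduct

lemma norm_binomialProduct_le (k : ℕ) (z : ℂ) :
    ‖binomialProduct k z‖ ≤ (∏ i ∈ range k, (‖z‖ ^ 2 + (i : ℝ) ^ 2)) / (k ! : ℝ) ^ 2 := by
  rw [binomialProduct, div_mul_div_comm, ← prod_mul_distrib, norm_div, norm_prod, norm_mul,
    Complex.norm_natCast, ← sq]
  gcongr with i
  calc ‖(z + i) * (z - i)‖ = ‖z ^ 2 - (i : ℂ) ^ 2‖ := by ring_nf
    _ ≤ ‖z‖ ^ 2 + (i : ℝ) ^ 2 :=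
      (norm_sub_le _ _).trans_eq (by rw [norm_pow, norm_pow, Complex.norm_natCast])

lemma eventually_norm_binomialProduct_lt_one (M : ℝ) :
    ∀ᶠ k in atTop, ∀ z : ℂ, ‖z‖ ≤ M → ‖binomialProduct k z‖ < 1 := by
  filter_upwards [eventually_prod_range_add_sq_lt_factorial_sq (sq_nonneg M)] with k hk z hz
  calc ‖binomialProduct k z‖ ≤ (∏ i ∈ range k, (‖z‖ ^ 2 + (i : ℝ) ^ 2)) / (k ! : ℝ) ^ 2 :=
        norm_binomialProduct_le k z
    _ ≤ (∏ i ∈ range k, (M ^ 2 + (i : ℝ) ^ 2)) / (k ! : ℝ) ^ 2 := by gcongr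
    _ < 1 := (div_lt_one (by positivity)).mpr hk

lemma eq_zero_of_isIntegral_of_forall_norm_lt_one {K : Type*} [Field K] [Algebra ℚ K]
    [FiniteDimensional ℚ K] {α : K} (hα : IsIntegral ℤ α) (hsmall : ∀ σ : K →ₐ[ℚ] ℂ, ‖σ α‖ < 1) :
    α = 0 := by
  obtain ⟨z, hz⟩ := IsIntegrallyClosed.isIntegral_iff.mp (Algebra.isIntegral_norm ℚ hα)
  have hnorm : ‖(z : ℂ)‖ < 1 := by
    classical
    let σ₀ : K →ₐ[ℚ] ℂ := IsAlgClosed.lift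
    have hzC : (z : ℂ) = ∏ σ : K →ₐ[ℚ] ℂ, σ α := by
      rw [← Algebra.norm_eq_prod_embeddings ℚ ℂ α, ← hz]; simp
    rw [hzC, norm_prod, ← mul_prod_erase _ _ (mem_univ σ₀)]
    calc ‖σ₀ α‖ * ∏ σ ∈ univ.erase σ₀, ‖σ α‖ ≤ ‖σ₀ α‖ * 1 := by
          gcongr
          exact prod_le_one (fun σ _ ↦ norm_nonneg _) (fun σ _ ↦ (hsmall σ).le)
      _ < 1 := by rw [mul_one]; exact hsmall σ₀
  rw [Complex.norm_intCast] at hnorm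
  have hz0 : z = 0 := Int.abs_lt_one_iff.mp (by exact_mod_cast hnorm)
  rwa [hz0, map_zero, eq_comm, Algebra.norm_eq_zero_iff] at hz

/-- If `d` is an algebraic integer such that `d(d+1)⋯(d+k-1)/k!` and
`d(d-1)⋯(d-k+1)/k!` are algebraic integers for all positive integers `k`,
then `d` is a rational integer. -/
theorem stmt_0 (d : ℂ) (hd : IsIntegral ℤ d)
    (h1 : ∀ k : ℕ, 0 < k →
      IsIntegral ℤ ((∏ i ∈ Finset.range k, (d + (i : ℂ))) / (k.factorial : ℂ)))
    (h2 : ∀ k : ℕ, 0 < k →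
      IsIntegral ℤ ((∏ i ∈ Finset.range k, (d - (i : ℂ))) / (k.factorial : ℂ))) :
    ∃ m : ℤ, d = (m : ℂ) := by
  have : FiniteDimensional ℚ ℚ⟮d⟯ := adjoin.finiteDimensional hd.tower_top
  set x := AdjoinSimple.gen ℚ d
  obtain ⟨M, hM⟩ := Finite.bddAbove_range fun σ : ℚ⟮d⟯ →ₐ[ℚ] ℂ ↦ ‖σ x‖
  obtain ⟨k, hsmall, hk⟩ :=
    ((eventually_norm_binomialProduct_lt_one M).and (eventually_gt_atTop 0)).exists
  have hα : algebraMap ℚ⟮d⟯ ℂ (binomialProduct k x) = binomialProduct k d := by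
    rw [map_binomialProduct, AdjoinSimple.algebraMap_gen]
  have hint : IsIntegral ℤ (binomialProduct k x) := by
    rw [← isIntegral_algebraMap_iff (algebraMap ℚ⟮d⟯ ℂ).injective, hα]
    exact (h1 k hk).mul (h2 k hk)
  refine exists_eq_intCast_of_binomialProduct_eq_zero (k := k) ?_
  rw [← hα, eq_zero_of_isIntegral_of_forall_norm_lt_one hint fun σ ↦ ?_, map_zero]
  rw [map_binomialProduct]
  exact hsmall _ (hM ⟨σ, rfl⟩)
end

section
/- Let Q(x) = x^n + a x^{n-1} + ... be a monic integer polynomial with a ≤ 0, and suppose that for every positive integer k the rational numbers Q(0)Q(1)···Q(k-1)/(k!)^n are integers. Then Q has an integer root. -/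
/-!
Write `Q(0)⋯Q(k-1) = (k!)^n b_k` with `b_k ∈ ℤ`, so that `(k+1)^n b_{k+1} = Q(k) b_k`.
Since `(X+1)^n - Q` has leading coefficient `n - a > 0` and `Q` is monic, eventually
`0 < Q(k) < (k+1)^n`. If `Q` had no integer root, all `b_k` would be nonzero and `|b_k|` would
eventually decrease strictly, which is impossible for integers.
-/

open Polynomial Filter

theorem WellFoundedLT.not_eventually_apply_succ_lt {α : Type*} [Preorder α] [WellFoundedLT α]
    (u : ℕ → α) : ¬ ∀ᶠ k in atTop, u (k + 1) < u k := by
  intro h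
  obtain ⟨K, hK⟩ := eventually_atTop.1 h
  exact not_strictAnti_of_wellFoundedLT (fun i ↦ u (K + i))
    (strictAnti_nat_of_succ_lt fun i ↦ hK (K + i) (Nat.le_add_right K i))

theorem Int.natAbs_lt_natAbs_of_mul_eq_mul {a c x y : ℤ} (h : a * y = c * x) (hc : |c| < a)
    (hx : x ≠ 0) : y.natAbs < x.natAbs := by
  have ha : 0 < a := (abs_nonneg c).trans_lt hc
  rw [← Int.ofNat_lt, Int.natCast_natAbs, Int.natCast_natAbs]
  refine lt_of_mul_lt_mul_left ?_ ha.le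
  calc a * |y| = |c| * |x| := by rw [← abs_of_pos ha, ← abs_mul, ← abs_mul, h]
    _ < a * |x| := mul_lt_mul_of_pos_right hc (abs_pos.2 hx)

namespace Polynomial

theorem eventually_pos_eval_natCast {p : ℤ[X]} (hp : 0 < p.leadingCoeff) :
    ∀ᶠ k : ℕ in atTop, 0 < p.eval (k : ℤ) := by
  set P := p.map (Int.castRingHom ℝ)
  have hP : 0 < P.leadingCoeff := by
    simpa [P, leadingCoeff_map_of_injective (Int.castRingHom ℝ).injective_int] using hp
  have hPpos : ∀ᶠ x : ℝ in atTop, 0 < P.eval x := by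
    rcases lt_or_ge 0 P.degree with hd | hd
    · exact (P.tendsto_atTop_of_leadingCoeff_nonneg hd hP.le).eventually_gt_atTop 0
    · rw [eq_C_of_degree_le_zero hd] at hP ⊢
      exact .of_forall fun _ ↦ by simpa using hP
  filter_upwards [tendsto_natCast_atTop_atTop.eventually hPpos] with k hk
  simpa [P] using hk

theorem leadingCoeff_X_add_one_pow_sub {R : Type*} [CommRing R] {Q : R[X]} {n : ℕ}
    (hQ : Q.Monic) (hdeg : Q.natDegree = n) (hn : 0 < n) (ha : Q.coeff (n - 1) ≠ n) :
    ((X + 1) ^ n - Q).leadingCoeff = n - Q.coeff (n - 1) := by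
  have hcoeff : ((X + 1) ^ n - Q).coeff (n - 1) = n - Q.coeff (n - 1) := by
    simp [coeff_X_add_one_pow, Nat.choose_symm hn]
  have hle : ((X + 1) ^ n - Q).natDegree ≤ n - 1 := by
    rw [natDegree_le_iff_coeff_eq_zero]
    intro k hk
    rcases (show n ≤ k by omega).eq_or_lt with rfl | hnk
    · simp [coeff_X_add_one_pow, ← hdeg, hQ.coeff_natDegree]
    · simp [coeff_X_add_one_pow, Nat.choose_eq_zero_of_lt hnk,
        coeff_eq_zero_of_natDegree_lt (hdeg ▸ hnk)]
  rw [leadingCoeff, natDegree_eq_of_le_of_coeff_ne_zero hle (hcoeff ▸ sub_ne_zero.2 ha.symm),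
    hcoeff]

theorem eventually_abs_eval_lt_succ_pow {Q : ℤ[X]} {n : ℕ} (hQ : Q.Monic)
    (hdeg : Q.natDegree = n) (hn : 0 < n) (ha : Q.coeff (n - 1) < n) :
    ∀ᶠ k : ℕ in atTop, |Q.eval (k : ℤ)| < ((k : ℤ) + 1) ^ n := by
  have hR : 0 < ((X + 1) ^ n - Q).leadingCoeff := by
    rw [leadingCoeff_X_add_one_pow_sub hQ hdeg hn ha.ne]
    exact sub_pos.2 ha
  filter_upwards [eventually_pos_eval_natCast (hQ.leadingCoeff ▸ one_pos),
    eventually_pos_eval_natCast hR] with k hQk hRk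
  rw [abs_of_pos hQk]
  simpa using hRk

end Polynomial

/-- If `Q(x) = x^n + a x^{n-1} + ⋯` is a monic integer polynomial with `a ≤ 0`, and for
every positive integer `k` the rational number `Q(0)Q(1)⋯Q(k-1)/(k!)^n` is an integer,
then `Q` has an integer root. -/
theorem stmt_1 (n : ℕ) (Q : Polynomial ℤ) (hQ : Q.Monic) (hdeg : Q.natDegree = n)
    (ha : Q.coeff (n - 1) ≤ 0)
    (hint : ∀ k : ℕ, 0 < k →
      ((k.factorial : ℤ) ^ n) ∣ ∏ j ∈ Finset.range k, Q.eval (j : ℤ)) :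
    ∃ m : ℤ, Q.eval m = 0 := by
  by_contra! hroot
  have hn : 0 < n := by
    by_contra! h0
    simp_all [Nat.le_zero.1 h0]
  have hdvd (k : ℕ) : ((k.factorial : ℤ) ^ n) ∣ ∏ j ∈ Finset.range k, Q.eval (j : ℤ) := by
    rcases k.eq_zero_or_pos with rfl | hk
    · simp
    · exact hint k hk
  choose b hb using hdvd
  have hb0 (k : ℕ) : b k ≠ 0 := by
    intro hbk
    obtain ⟨j, -, hj⟩ := Finset.prod_eq_zero_iff.1 ((hb k).trans (by rw [hbk, mul_zero]))
    exact hroot j hj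
  have hrec (k : ℕ) : ((k : ℤ) + 1) ^ n * b (k + 1) = Q.eval (k : ℤ) * b k := by
    have h := hb (k + 1)
    rw [Finset.prod_range_succ, hb k, Nat.factorial_succ] at h
    refine mul_left_cancel₀ (pow_ne_zero n (Nat.cast_ne_zero.2 k.factorial_ne_zero)) ?_
    push_cast [mul_pow] at h
    linear_combination -h
  apply WellFoundedLT.not_eventually_apply_succ_lt (fun k ↦ (b k).natAbs)
  filter_upwards [eventually_abs_eval_lt_succ_pow hQ hdeg hn (ha.trans_lt (by positivity))]
    with k hk
  exact Int.natAbs_lt_natAbs_of_mul_eq_mul (hrec k) hk (hb0 k)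
end

section
/- In Sweedler's 4-dimensional Hopf algebra H, generated by a grouplike g and an element x with Δ(x) = x⊗1 + g⊗x, relations g² = 1, x² = 0, gx = −xg, the element J_λ := 1⊗1 − (λ/2) gx⊗x is a twist: it is invertible and satisfies (Δ⊗id)(J_λ)(J_λ⊗1) = (id⊗Δ)(J_λ)(1⊗J_λ) and (ε⊗id)(J_λ) = (id⊗ε)(J_λ) = 1, for every λ ∈ ℂ. -/
/-!
With `y = g x`, the relations give `y² = x y = y x = 0`, so `J = 1 - c • y ⊗ x` is
unipotent with inverse `1 + c • y ⊗ x`. Since `Δ(y) = y ⊗ g + 1 ⊗ y`, both sides of the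
twist equation are `1 - c • (y ⊗ g ⊗ x + 1 ⊗ y ⊗ x + y ⊗ x ⊗ 1)`: every term quadratic
in `c` vanishes by those relations. The counit conditions follow from `ε(x) = ε(y) = 0`.
-/

open TensorProduct

section SquareZero

variable {A : Type*} [Ring A] {t : A}

theorem one_sub_mul_one_add_of_mul_self_eq_zero (ht : t * t = 0) : (1 - t) * (1 + t) = 1 := by
  rw [sub_mul, one_mul, mul_add, mul_one, ht, add_zero, add_sub_cancel_right]

theorem one_add_mul_one_sub_of_mul_self_eq_zero (ht : t * t = 0) : (1 + t) * (1 - t) = 1 := by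
  rw [add_mul, one_mul, mul_sub, mul_one, ht, sub_zero, sub_add_cancel]

end SquareZero

theorem smul_tmul_mul_self_eq_zero {R A : Type*} [CommRing R] [Ring A] [Algebra R A] (c : R)
    (a : A) {b : A} (hb : b * b = 0) : (c • (a ⊗ₜ[R] b)) * (c • (a ⊗ₜ[R] b)) = 0 := by
  rw [smul_mul_smul, Algebra.TensorProduct.tmul_mul_tmul, hb, tmul_zero, smul_zero]

namespace Sweedler

section Relations

variable {A : Type*} [Ring A] {g x : A}

theorem gx_mul_gx (hg2 : g * g = 1) (hx2 : x * x = 0) (hgx : g * x = -(x * g)) :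
    (g * x) * (g * x) = 0 :=
  calc (g * x) * (g * x) = -(x * (g * g) * x) := by rw [← mul_assoc, hgx]; noncomm_ring
    _ = 0 := by rw [hg2, mul_one, hx2, neg_zero]

theorem x_mul_gx (hx2 : x * x = 0) (hgx : g * x = -(x * g)) : x * (g * x) = 0 :=
  calc x * (g * x) = -(x * x * g) := by rw [hgx]; noncomm_ring
    _ = 0 := by rw [hx2, zero_mul, neg_zero]

theorem gx_mul_x (hx2 : x * x = 0) : (g * x) * x = 0 := by
  rw [mul_assoc, hx2, mul_zero]

end Relations

section Bialgebra

variable {R A : Type*} [CommRing R] [Ring A] [Bialgebra R A] {g x : A}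

theorem comul_gx (hg2 : g * g = 1) (hΔg : Coalgebra.comul (R := R) g = g ⊗ₜ g)
    (hΔx : Coalgebra.comul (R := R) x = x ⊗ₜ 1 + g ⊗ₜ x) :
    Coalgebra.comul (R := R) (g * x) = (g * x) ⊗ₜ g + (1 : A) ⊗ₜ (g * x) := by
  rw [Bialgebra.comul_mul, hΔg, hΔx, mul_add, Algebra.TensorProduct.tmul_mul_tmul,
    Algebra.TensorProduct.tmul_mul_tmul, mul_one, hg2]

theorem counit_gx (hεx : Coalgebra.counit (R := R) x = 0) :
    Coalgebra.counit (R := R) (g * x) = 0 := by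
  rw [Bialgebra.counit_mul, hεx, mul_zero]

variable (R)

noncomputable def twist (c : R) (g x : A) : A ⊗[R] A :=
  1 - c • ((g * x) ⊗ₜ x)

noncomputable def twistCocycleValue (c : R) (g x : A) : A ⊗[R] (A ⊗[R] A) :=
  1 - c • ((g * x) ⊗ₜ (g ⊗ₜ x) + (1 : A) ⊗ₜ ((g * x) ⊗ₜ x) +
    (g * x) ⊗ₜ (x ⊗ₜ (1 : A)))

variable {R}

theorem assoc_comul_rTensor_twist_mul (c : R) (hg2 : g * g = 1) (hx2 : x * x = 0)
    (hgx : g * x = -(x * g)) (hΔg : Coalgebra.comul (R := R) g = g ⊗ₜ g)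
    (hΔx : Coalgebra.comul (R := R) x = x ⊗ₜ 1 + g ⊗ₜ x) :
    Algebra.TensorProduct.assoc R R R A A A
        ((LinearMap.rTensor A (Bialgebra.comulAlgHom R A).toLinearMap) (twist R c g x) *
          Algebra.TensorProduct.includeLeft (S := R) (twist R c g x)) =
      twistCocycleValue R c g x := by
  simp only [twist, twistCocycleValue, map_sub, map_smul,
    Algebra.TensorProduct.includeLeft_apply, Algebra.TensorProduct.one_def,
    LinearMap.rTensor_tmul, AlgHom.toLinearMap_apply, Bialgebra.comulAlgHom_apply,
    Bialgebra.comul_one, comul_gx hg2 hΔg hΔx, add_tmul, sub_mul, mul_sub, add_mul, one_mul,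
    mul_one, Algebra.TensorProduct.tmul_mul_tmul, smul_mul_assoc, mul_smul_comm,
    gx_mul_gx hg2 hx2 hgx, gx_mul_x hx2, zero_tmul, tmul_zero, smul_zero, add_zero, sub_zero,
    map_add, Algebra.TensorProduct.assoc_tmul]
  module

theorem comul_lTensor_twist_mul (c : R) (hx2 : x * x = 0) (hgx : g * x = -(x * g))
    (hΔx : Coalgebra.comul (R := R) x = x ⊗ₜ 1 + g ⊗ₜ x) :
    (LinearMap.lTensor A (Bialgebra.comulAlgHom R A).toLinearMap) (twist R c g x) *
        Algebra.TensorProduct.includeRight (twist R c g x) =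
      twistCocycleValue R c g x := by
  simp only [twist, twistCocycleValue, map_sub, map_smul,
    Algebra.TensorProduct.includeRight_apply, Algebra.TensorProduct.one_def,
    LinearMap.lTensor_tmul, AlgHom.toLinearMap_apply, Bialgebra.comulAlgHom_apply,
    Bialgebra.comul_one, hΔx, tmul_add, sub_mul, mul_sub, add_mul, one_mul, mul_one,
    Algebra.TensorProduct.tmul_mul_tmul, smul_mul_assoc, mul_smul_comm, x_mul_gx hx2 hgx, hx2,
    zero_tmul, tmul_zero, smul_zero, add_zero, sub_zero]
  module

theorem lid_counit_rTensor_twist (c : R) (hεx : Coalgebra.counit (R := R) x = 0) :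
    TensorProduct.lid R A
      (LinearMap.rTensor A (Coalgebra.counit (R := R)) (twist R c g x)) = 1 := by
  simp only [twist, map_sub, map_smul, Algebra.TensorProduct.one_def, LinearMap.rTensor_tmul,
    counit_gx hεx, Bialgebra.counit_one, zero_tmul, smul_zero, sub_zero, lid_tmul, one_smul]

theorem rid_counit_lTensor_twist (c : R) (hεx : Coalgebra.counit (R := R) x = 0) :
    TensorProduct.rid R A
      (LinearMap.lTensor A (Coalgebra.counit (R := R)) (twist R c g x)) = 1 := by
  simp only [twist, map_sub, map_smul, Algebra.TensorProduct.one_def, LinearMap.lTensor_tmul,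
    hεx, Bialgebra.counit_one, tmul_zero, smul_zero, sub_zero, rid_tmul, one_smul]

end Bialgebra

end Sweedler

theorem stmt_16_general (H : Type) [Ring H] [HopfAlgebra ℂ H] (g x : H)
    (hg2 : g * g = 1) (hx2 : x * x = 0) (hgx : g * x = -(x * g))
    (hΔg : Coalgebra.comul (R := ℂ) g = g ⊗ₜ g)
    (hΔx : Coalgebra.comul (R := ℂ) x = x ⊗ₜ 1 + g ⊗ₜ x)
    (hεx : Coalgebra.counit (R := ℂ) x = 0) (lam : ℂ) :
    let J : H ⊗[ℂ] H := 1 - (lam / 2) • ((g * x) ⊗ₜ x)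
    -- invertibility
    (J * (1 + (lam / 2) • ((g * x) ⊗ₜ x)) = 1 ∧
     (1 + (lam / 2) • ((g * x) ⊗ₜ x)) * J = 1) ∧
    -- the twist equation
    (Algebra.TensorProduct.assoc ℂ ℂ ℂ H H H)
        ((LinearMap.rTensor H (Bialgebra.comulAlgHom ℂ H).toLinearMap) J *
          (Algebra.TensorProduct.includeLeft (S := ℂ)) J) =
      (LinearMap.lTensor H (Bialgebra.comulAlgHom ℂ H).toLinearMap) J *
        Algebra.TensorProduct.includeRight J ∧
    -- the counit conditions
    (TensorProduct.lid ℂ H) ((LinearMap.rTensor H (Coalgebra.counit (R := ℂ))) J) = 1 ∧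
    (TensorProduct.rid ℂ H) ((LinearMap.lTensor H (Coalgebra.counit (R := ℂ))) J) = 1 := by
  have hsq := smul_tmul_mul_self_eq_zero (lam / 2) (g * x) hx2
  exact ⟨⟨one_sub_mul_one_add_of_mul_self_eq_zero hsq,
      one_add_mul_one_sub_of_mul_self_eq_zero hsq⟩,
    (Sweedler.assoc_comul_rTensor_twist_mul _ hg2 hx2 hgx hΔg hΔx).trans
      (Sweedler.comul_lTensor_twist_mul _ hx2 hgx hΔx).symm,
    Sweedler.lid_counit_rTensor_twist _ hεx, Sweedler.rid_counit_lTensor_twist _ hεx⟩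

/-- In Sweedler's 4-dimensional Hopf algebra (a Hopf algebra with a grouplike `g` and a
`(1,g)`-skewprimitive `x` with `g² = 1`, `x² = 0`, `gx = -xg`), the element
`J_λ = 1⊗1 - (λ/2) gx ⊗ x` is a twist for every `λ ∈ ℂ`: it is invertible and satisfies
`(Δ⊗id)(J_λ)(J_λ⊗1) = (id⊗Δ)(J_λ)(1⊗J_λ)` and `(ε⊗id)(J_λ) = (id⊗ε)(J_λ) = 1`. -/
theorem stmt_16 (H : Type) [Ring H] [HopfAlgebra ℂ H] (g x : H)
    (hg2 : g * g = 1) (hx2 : x * x = 0) (hgx : g * x = -(x * g))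
    (hΔg : Coalgebra.comul (R := ℂ) g = g ⊗ₜ g) (hεg : Coalgebra.counit (R := ℂ) g = 1)
    (hΔx : Coalgebra.comul (R := ℂ) x = x ⊗ₜ 1 + g ⊗ₜ x)
    (hεx : Coalgebra.counit (R := ℂ) x = 0) (lam : ℂ) :
    let J : H ⊗[ℂ] H := 1 - (lam / 2) • ((g * x) ⊗ₜ x)
    -- invertibility
    (J * (1 + (lam / 2) • ((g * x) ⊗ₜ x)) = 1 ∧
     (1 + (lam / 2) • ((g * x) ⊗ₜ x)) * J = 1) ∧
    -- the twist equation
    (Algebra.TensorProduct.assoc ℂ ℂ ℂ H H H)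
        ((LinearMap.rTensor H (Bialgebra.comulAlgHom ℂ H).toLinearMap) J *
          (Algebra.TensorProduct.includeLeft (S := ℂ)) J) =
      (LinearMap.lTensor H (Bialgebra.comulAlgHom ℂ H).toLinearMap) J *
        Algebra.TensorProduct.includeRight J ∧
    -- the counit conditions
    (TensorProduct.lid ℂ H) ((LinearMap.rTensor H (Coalgebra.counit (R := ℂ))) J) = 1 ∧
    (TensorProduct.rid ℂ H) ((LinearMap.lTensor H (Coalgebra.counit (R := ℂ))) J) = 1 :=
  stmt_16_general H g x hg2 hx2 hgx hΔg hΔx hεx lam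
end
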